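/- Let ω_N ⊂ S^d, d ≥ 1, be an m-stiff configuration, m ≥ 1, such that its dual D_m(ω_N) is finite and itself m-stiff. Then D_m(D_m(D_m(ω_N))) = D_m(ω_N). -/

import Mathlib

/-!
Let `X` be a spherical `(2m-1)`-design and `z, z₀ ∈ D_m(X)`. If `s` is a value of `⟪z, ·⟫` on `X`,
the Lagrange basis polynomial at `s` of the (at most `2m`) values of `⟪z, ·⟫` and `⟪z₀, ·⟫` has
degree at most `2m-1`. A design averages such a polynomial of `⟪w, ·⟫` to its spherical mean,
which does not depend on the unit vector `w` (a reflection carries one unit vector to another and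
preserves the sphere measure). Along `z` the sum counts the points with `⟪z, x⟫ = s`, so along
`z₀` it is nonzero too, and `s` is a value of `⟪z₀, ·⟫`. Hence every point of an `m`-stiff `X`
has at most `m` inner products with `D_m(X)`, i.e. `X ⊆ D_m(D_m(X))`. Applied to `X` and to
`D_m(X)`, and since `D_m` is antitone, this gives both inclusions.
-/

open MeasureTheory Metric
open scoped RealInnerProductSpace

noncomputable section

/-- `E n` is the Euclidean space `ℝ^n`; the unit sphere `S^{n-1}` is `Metric.sphere (0 : E n) 1`. -/
abbrev E (n : ℕ) : Type := EuclideanSpace ℝ (Fin n)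

/-- The surface area measure on the unit sphere of `ℝ^n`, normalized to be a probability
measure. -/
noncomputable def sphereUnif (n : ℕ) : Measure (sphere (0 : E n) 1) :=
  (((volume : Measure (E n)).toSphere) Set.univ)⁻¹ • (volume : Measure (E n)).toSphere

/-- `X` is a spherical `k`-design on the unit sphere of `ℝ^n`: all its points lie on the sphere
and every polynomial of total degree at most `k` has average over `X` equal to its average over
the sphere (with respect to the normalized surface area measure). -/
def IsSphericalDesign (n k : ℕ) (X : Finset (E n)) : Prop :=
  (↑X : Set (E n)) ⊆ sphere (0 : E n) 1 ∧
    ∀ p : MvPolynomial (Fin n) ℝ, p.totalDegree ≤ k →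
      (∑ x ∈ X, MvPolynomial.eval (fun i => x i) p) / (X.card : ℝ) =
        ∫ y, MvPolynomial.eval (fun i => (y : E n) i) p ∂(sphereUnif n)

/-- `Dm n m X` is the set of points `z` of the unit sphere of `ℝ^n` forming at most `m`
distinct dot products with the points of `X`. -/
def Dm (n m : ℕ) (X : Set (E n)) : Set (E n) :=
  {z | z ∈ sphere (0 : E n) 1 ∧ ∃ T : Finset ℝ, T.card ≤ m ∧ ∀ x ∈ X, ⟪z, x⟫ ∈ T}

/-- `X` is an `m`-stiff configuration on the unit sphere of `ℝ^n`: it is a spherical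
`(2m-1)`-design and some point of the sphere forms at most `m` distinct dot products with the
points of `X`. -/
def IsStiff (n m : ℕ) (X : Finset (E n)) : Prop :=
  IsSphericalDesign n (2 * m - 1) X ∧ (Dm n m ↑X).Nonempty

open scoped Pointwise

section SphereInvariance

variable {F : Type*} [NormedAddCommGroup F] [NormedSpace ℝ F]

def LinearIsometryEquiv.sphereHomeomorph (f : F ≃ₗᵢ[ℝ] F) :
    sphere (0 : F) 1 ≃ₜ sphere (0 : F) 1 :=
  f.toHomeomorph.sets (by simp [f.preimage_sphere])

theorem MeasureTheory.Measure.map_sphereHomeomorph_toSphere [MeasurableSpace F] [BorelSpace F]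
    {μ : Measure F} {f : F ≃ₗᵢ[ℝ] F} (hf : MeasurePreserving f μ μ) :
    μ.toSphere.map f.sphereHomeomorph = μ.toSphere := by
  refine Measure.ext fun s hs => ?_
  have hmeas := f.sphereHomeomorph.measurable
  rw [Measure.map_apply hmeas hs, Measure.toSphere_apply' _ (hmeas hs),
    Measure.toSphere_apply' _ hs, ← Homeomorph.image_symm, Set.image_image]
  have : Set.Ioo (0 : ℝ) 1 • ((fun y => (f.sphereHomeomorph.symm y : F)) '' s) =
      f ⁻¹' (Set.Ioo (0 : ℝ) 1 • ((↑) '' s)) := by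
    rw [← f.symm_symm, ← f.symm.image_eq_preimage_symm, f.symm_symm, ← Set.image2_smul,
      ← Set.image2_smul, Set.image_image2_distrib_right (fun r x => f.symm.map_smul r x),
      Set.image_image]
    rfl
  rw [this]
  exact congrArg _ (hf.measure_preimage_equiv (f := f.toHomeomorph.toMeasurableEquiv) _)

end SphereInvariance

theorem measurePreserving_sphereHomeomorph_sphereUnif {n : ℕ} (f : E n ≃ₗᵢ[ℝ] E n) :
    MeasurePreserving f.sphereHomeomorph (sphereUnif n) (sphereUnif n) :=
  ⟨f.sphereHomeomorph.measurable, by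
    rw [sphereUnif, Measure.map_smul, Measure.map_sphereHomeomorph_toSphere f.measurePreserving]⟩

theorem integral_sphereUnif_comp_inner_eq {n : ℕ} (φ : ℝ → ℝ) {z z' : E n} (hz : ‖z‖ = 1)
    (hz' : ‖z'‖ = 1) :
    ∫ y, φ ⟪z, (y : E n)⟫ ∂sphereUnif n = ∫ y, φ ⟪z', (y : E n)⟫ ∂sphereUnif n := by
  set f : E n ≃ₗᵢ[ℝ] E n := Submodule.reflection (ℝ ∙ (z' - z))ᗮ
  have hfz : f z' = z := Submodule.reflection_sub (hz'.trans hz.symm)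
  rw [← (measurePreserving_sphereHomeomorph_sphereUnif f).integral_comp'
    (f := f.sphereHomeomorph.toMeasurableEquiv)]
  simp_rw [← hfz]
  congr 1 with y
  exact congrArg φ (f.inner_map_map z' y)

theorem MvPolynomial.totalDegree_aeval_le {σ R : Type*} [CommSemiring R]
    {L : MvPolynomial σ R} (hL : L.totalDegree ≤ 1) (q : Polynomial R) :
    (Polynomial.aeval L q).totalDegree ≤ q.natDegree := by
  rw [Polynomial.aeval_eq_sum_range]
  refine (totalDegree_finsetSum _ _).trans (Finset.sup_le fun i hi => ?_)
  calc (q.coeff i • L ^ i).totalDegree ≤ (L ^ i).totalDegree := totalDegree_smul_le _ _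
    _ ≤ i * L.totalDegree := totalDegree_pow _ _
    _ ≤ q.natDegree := by
      have := Finset.mem_range_succ_iff.mp hi
      nlinarith

theorem IsSphericalDesign.sum_eval_inner_eq {n k : ℕ} {X : Finset (E n)}
    (hX : IsSphericalDesign n k X) {q : Polynomial ℝ} (hq : q.natDegree ≤ k) {z z' : E n}
    (hz : ‖z‖ = 1) (hz' : ‖z'‖ = 1) :
    ∑ x ∈ X, q.eval ⟪z, x⟫ = ∑ x ∈ X, q.eval ⟪z', x⟫ := by
  let P (w : E n) : MvPolynomial (Fin n) ℝ :=
    Polynomial.aeval (∑ i, MvPolynomial.C (w i) * MvPolynomial.X i) q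
  have hP (w x : E n) : MvPolynomial.eval (fun i => x i) (P w) = q.eval ⟪w, x⟫ := by
    rw [← MvPolynomial.aeval_eq_eval, ← Polynomial.aeval_algHom_apply,
      Polynomial.coe_aeval_eq_eval]
    simp [PiLp.inner_apply, mul_comm]
  have hdeg (w : E n) : (P w).totalDegree ≤ k :=
    ((MvPolynomial.totalDegree_aeval_le
      ((MvPolynomial.IsHomogeneous.sum _ _ _ fun i _ =>
        MvPolynomial.isHomogeneous_C_mul_X (w i) i).totalDegree_le) q).trans hq)
  have hmean (w : E n) : (∑ x ∈ X, q.eval ⟪w, x⟫) / X.card =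
      ∫ y, q.eval ⟪w, (y : E n)⟫ ∂sphereUnif n := by
    simpa only [hP] using hX.2 _ (hdeg w)
  rcases X.eq_empty_or_nonempty with rfl | hne
  · simp
  have hcard : (X.card : ℝ) ≠ 0 := by exact_mod_cast hne.card_pos.ne'
  have h := (hmean z).trans
    ((integral_sphereUnif_comp_inner_eq q.eval hz hz').trans (hmean z').symm)
  rwa [div_left_inj' hcard] at h

theorem mem_Dm_coe_finset_iff {n m : ℕ} {X : Finset (E n)} {z : E n} :
    z ∈ Dm n m ↑X ↔ z ∈ sphere (0 : E n) 1 ∧ (X.image (⟪z, ·⟫)).card ≤ m :=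
  and_congr_right fun _ =>
    ⟨fun ⟨_, hT, hXT⟩ => (Finset.card_le_card (Finset.image_subset_iff.2 hXT)).trans hT,
      fun h => ⟨_, h, fun _ hx => Finset.mem_image_of_mem _ hx⟩⟩

theorem Dm_anti {n m : ℕ} {A B : Set (E n)} (h : A ⊆ B) : Dm n m B ⊆ Dm n m A :=
  fun _ ⟨hz, T, hT, hBT⟩ => ⟨hz, T, hT, fun x hx => hBT x (h hx)⟩

theorem IsSphericalDesign.image_inner_subset {n m : ℕ} {X : Finset (E n)}
    (hX : IsSphericalDesign n (2 * m - 1) X) {z z₀ : E n} (hz : z ∈ Dm n m ↑X)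
    (hz₀ : z₀ ∈ Dm n m ↑X) : X.image (⟪z, ·⟫) ⊆ X.image (⟪z₀, ·⟫) := by
  rw [mem_Dm_coe_finset_iff, mem_sphere_zero_iff_norm] at hz hz₀
  intro s hs
  by_contra hs₀
  set S := X.image (⟪z₀, ·⟫) ∪ X.image (⟪z, ·⟫)
  have hsS : s ∈ S := Finset.mem_union_right _ hs
  have hdeg : (Lagrange.basis S id s).natDegree ≤ 2 * m - 1 := by
    rw [Lagrange.natDegree_basis (Set.injOn_id _) hsS]
    have : S.card ≤ _ := Finset.card_union_le _ _
    omega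
  have hL : ∀ t ∈ S, (Lagrange.basis S id s).eval t = if t = s then 1 else 0 := by
    intro t ht
    split_ifs with h
    · subst h; exact Lagrange.eval_basis_self (Set.injOn_id _) ht
    · exact Lagrange.eval_basis_of_ne (v := id) (Ne.symm h) ht
  have hsum := hX.sum_eval_inner_eq hdeg hz.1 hz₀.1
  rw [Finset.sum_congr rfl fun x hx =>
      hL _ (Finset.mem_union_right _ (Finset.mem_image_of_mem _ hx)),
    Finset.sum_congr rfl fun x hx =>
      hL _ (Finset.mem_union_left _ (Finset.mem_image_of_mem _ hx)),
    Finset.sum_boole, Finset.sum_boole] at hsum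
  have hempty : X.filter (⟪z₀, ·⟫ = s) = ∅ :=
    Finset.filter_eq_empty_iff.2 fun x hx h => hs₀ (h ▸ Finset.mem_image_of_mem _ hx)
  obtain ⟨x, hx, rfl⟩ := Finset.mem_image.1 hs
  rw [hempty, Finset.card_empty, Nat.cast_zero, Nat.cast_eq_zero, Finset.card_eq_zero] at hsum
  exact Finset.eq_empty_iff_forall_notMem.1 hsum x (Finset.mem_filter.2 ⟨hx, rfl⟩)

theorem IsStiff.subset_Dm_Dm {n m : ℕ} {W : Finset (E n)} (hW : IsStiff n m W) :
    ↑W ⊆ Dm n m (Dm n m ↑W) := by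
  obtain ⟨z₀, hz₀⟩ := hW.2
  intro w hw
  refine ⟨hW.1.1 hw, W.image (⟪z₀, ·⟫), (mem_Dm_coe_finset_iff.1 hz₀).2, fun z hz => ?_⟩
  rw [real_inner_comm]
  exact hW.1.image_inner_subset hz hz₀ (Finset.mem_image_of_mem _ hw)

theorem triple_dual_eq_dual (d m : ℕ)
    (X : Finset (E (d + 1))) (hstiff : IsStiff (d + 1) m X)
    (hfin : (Dm (d + 1) m ↑X).Finite)
    (hdualstiff : IsStiff (d + 1) m hfin.toFinset) :
    Dm (d + 1) m (Dm (d + 1) m (Dm (d + 1) m ↑X)) = Dm (d + 1) m ↑X :=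
  (Dm_anti hstiff.subset_Dm_Dm).antisymm
    (by simpa only [Set.Finite.coe_toFinset] using hdualstiff.subset_Dm_Dm)
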